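/- arXiv:math/0605319 — 3 statements merged into one kernel-verified Lean document; each statement's English description precedes it below -/
import Mathlib

section
/- The set of integer triples (ν₂, ν₃, ν₆) with ν₂ + ν₃ + ν₆ = 1 satisfying: (−4ν₃ + 12)/6 and (4ν₃ + 12)/6 are non-negative integers; (−2ν₂ + 4ν₆ + 8)/6, (2ν₂ − 4ν₆ + 10)/6, (ν₂ − 2ν₆ + 8)/6 are non-negative integers; and (−4ν₂ + 2ν₃ + 2ν₆ + 10)/6, (2ν₂ − ν₃ − ν₆ + 7)/6 are non-negative integers, is exactly {(−2,3,0), (0,0,1), (0,3,−2), (2,−3,2), (2,0,−1)}. -/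
set_option maxHeartbeats 1600000 in
/-- Luthar–Passi system for units of order 6 in V(ZM₁₁). -/
theorem order6_solutions (ν₂ ν₃ ν₆ : ℤ) :
    (ν₂ + ν₃ + ν₆ = 1 ∧
      ((6 : ℤ) ∣ (-4 * ν₃ + 12) ∧ 0 ≤ -4 * ν₃ + 12) ∧
      ((6 : ℤ) ∣ (4 * ν₃ + 12) ∧ 0 ≤ 4 * ν₃ + 12) ∧
      ((6 : ℤ) ∣ (-2 * ν₂ + 4 * ν₆ + 8) ∧ 0 ≤ -2 * ν₂ + 4 * ν₆ + 8) ∧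
      ((6 : ℤ) ∣ (2 * ν₂ - 4 * ν₆ + 10) ∧ 0 ≤ 2 * ν₂ - 4 * ν₆ + 10) ∧
      ((6 : ℤ) ∣ (ν₂ - 2 * ν₆ + 8) ∧ 0 ≤ ν₂ - 2 * ν₆ + 8) ∧
      ((6 : ℤ) ∣ (-4 * ν₂ + 2 * ν₃ + 2 * ν₆ + 10) ∧ 0 ≤ -4 * ν₂ + 2 * ν₃ + 2 * ν₆ + 10) ∧
      ((6 : ℤ) ∣ (2 * ν₂ - ν₃ - ν₆ + 7) ∧ 0 ≤ 2 * ν₂ - ν₃ - ν₆ + 7)) ↔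
    ((ν₂, ν₃, ν₆) = (-2, 3, 0) ∨ (ν₂, ν₃, ν₆) = (0, 0, 1) ∨ (ν₂, ν₃, ν₆) = (0, 3, -2) ∨
      (ν₂, ν₃, ν₆) = (2, -3, 2) ∨ (ν₂, ν₃, ν₆) = (2, 0, -1)) := by
  simp only [Prod.mk.injEq]
  constructor
  · rintro ⟨h1, ⟨d1, p1⟩, ⟨d2, p2⟩, ⟨d3, p3⟩, ⟨d4, p4⟩, ⟨d5, p5⟩, ⟨d6, p6⟩, ⟨d7, p7⟩⟩
    have h3 : ν₃ = -3 ∨ ν₃ = 0 ∨ ν₃ = 3 := by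
      clear h1 d3 p3 d4 p4 d5 p5 d6 p6 d7 p7; omega
    have h6 : ν₆ = 1 - ν₂ - ν₃ := by omega
    subst h6
    rcases h3 with rfl | rfl | rfl <;> omega
  · rintro (⟨rfl, rfl, rfl⟩ | ⟨rfl, rfl, rfl⟩ | ⟨rfl, rfl, rfl⟩ | ⟨rfl, rfl, rfl⟩ |
      ⟨rfl, rfl, rfl⟩) <;> norm_num
end

section
/- There is no integer ν₃ such that (2ν₃ + 9)/33 and (−20ν₃ + 9)/33 are both non-negative integers. -/
/-- No units of order 33: no integer ν₃ makes (2ν₃+9)/33 and (−20ν₃+9)/33 both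
non-negative integers. -/
theorem no_order33 :
    ¬ ∃ ν₃ : ℤ, ((33 : ℤ) ∣ (2 * ν₃ + 9) ∧ 0 ≤ 2 * ν₃ + 9) ∧
      ((33 : ℤ) ∣ (-20 * ν₃ + 9) ∧ 0 ≤ -20 * ν₃ + 9) := by
  rintro ⟨ν, ⟨h1,h2⟩, h3,h4⟩; omega
end

section
/- Suppose u is a torsion unit of V(ZG) of order k, z is a primitive k-th root of unity, and χ is an ordinary character of G. Then for every integer l, the quantity μ_l(u,χ) = (1/k) Σ_{d|k} Tr_{ℚ(z^d)/ℚ}(χ(u^d) z^{−dl}) equals the multiplicity of the eigenvalue z^l of the image of u in the representation affording χ; in particular, if χ(u^d) = Σᵢ νᵢ(u^d) χ(hᵢ) is expressed via partial augmentations, μ_l(u,χ) is a non-negative integer. -/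
open Finset Module

section aux

lemma LP.sum_range_shift {M : Type*} [AddCommGroup M] (g : ℕ → M) (k : ℕ) (hg : g k = g 0) :
    ∑ a ∈ range k, g (a + 1) = ∑ a ∈ range k, g a := by
  have h1 : ∑ a ∈ range (k + 1), g a = (∑ a ∈ range k, g (a + 1)) + g 0 :=
    Finset.sum_range_succ' g k
  have h2 : ∑ a ∈ range (k + 1), g a = (∑ a ∈ range k, g a) + g k :=
    Finset.sum_range_succ g k
  rw [h1, hg] at h2
  exact add_right_cancel h2

lemma LP.sum_pow_of_pow_eq_one {k : ℕ} (hk : 0 < k) (c : ℂ) :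
    ∑ a ∈ range k, c ^ a = if c = 1 then (k : ℂ) else (c ^ k - 1) / (c - 1) := by
  split_ifs with h
  · simp [h]
  · exact geom_sum_eq h k

variable {V : Type*} [AddCommGroup V] [Module ℂ V] [FiniteDimensional ℂ V]
variable (f : Module.End ℂ V) {k : ℕ} {z : ℂ}

/-- The spectral projection onto the eigenspace of `z ^ j`. -/
noncomputable def LP.P (f : Module.End ℂ V) (k : ℕ) (z : ℂ) (j : ℕ) : Module.End ℂ V :=
  (k : ℂ)⁻¹ • ∑ a ∈ range k, (z⁻¹ ^ j) ^ a • f ^ a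

lemma LP.mul_P (hz : IsPrimitiveRoot z k) (hk : 0 < k) (hf : f ^ k = 1) (j : ℕ) :
    f * LP.P f k z j = z ^ j • LP.P f k z j := by
  have hz0 : z ≠ 0 := hz.ne_zero hk.ne'
  set c : ℂ := z⁻¹ ^ j with hc
  have hc0 : c ≠ 0 := pow_ne_zero _ (inv_ne_zero hz0)
  have hck : c ^ k = 1 := by
    rw [hc, ← pow_mul, mul_comm, pow_mul, inv_pow, hz.pow_eq_one, inv_one, one_pow]
  have hshift : ∑ a ∈ range k, (c ^ (a + 1) • f ^ (a + 1)) = ∑ a ∈ range k, c ^ a • f ^ a :=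
    LP.sum_range_shift (fun b => c ^ b • f ^ b) k (by simp [hck, hf])
  have hinv : c⁻¹ = z ^ j := by rw [hc, ← inv_pow, inv_inv]
  rw [LP.P, mul_smul_comm, Finset.mul_sum, smul_comm (z ^ j) ((k : ℂ)⁻¹), ← hinv]
  congr 1
  calc ∑ a ∈ range k, f * c ^ a • f ^ a
      = ∑ a ∈ range k, c⁻¹ • (c ^ (a + 1) • f ^ (a + 1)) := by
        refine Finset.sum_congr rfl fun a _ => ?_
        have hca : c⁻¹ * c ^ (a + 1) = c ^ a := by field_simp [pow_succ]; ring
        rw [smul_smul, hca, mul_smul_comm, ← pow_succ']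
    _ = c⁻¹ • ∑ a ∈ range k, c ^ a • f ^ a := by rw [← smul_sum, hshift]

lemma LP.pow_mul_P (hz : IsPrimitiveRoot z k) (hk : 0 < k) (hf : f ^ k = 1) (j d : ℕ) :
    f ^ d * LP.P f k z j = (z ^ j) ^ d • LP.P f k z j := by
  induction d with
  | zero => simp
  | succ n ih =>
      rw [pow_succ, mul_assoc, LP.mul_P f hz hk hf, mul_smul_comm, ih, smul_smul, pow_succ,
        mul_comm]

lemma LP.P_idem (hz : IsPrimitiveRoot z k) (hk : 0 < k) (hf : f ^ k = 1) (j : ℕ) :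
    LP.P f k z j * LP.P f k z j = LP.P f k z j := by
  have hz0 : z ≠ 0 := hz.ne_zero hk.ne'
  have hk0 : (k : ℂ) ≠ 0 := Nat.cast_ne_zero.mpr hk.ne'
  have main : ∀ Q : Module.End ℂ V, (∀ a : ℕ, f ^ a * Q = (z ^ j) ^ a • Q) →
      LP.P f k z j * Q = Q := by
    intro Q hQ
    rw [LP.P, smul_mul_assoc, Finset.sum_mul]
    have : ∀ a ∈ range k, ((z⁻¹ ^ j) ^ a • f ^ a) * Q = Q := by
      intro a _
      rw [smul_mul_assoc, hQ, smul_smul, ← mul_pow, ← mul_pow,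
        inv_mul_cancel₀ hz0, one_pow, one_pow, one_smul]
    rw [Finset.sum_congr rfl this, Finset.sum_const, Finset.card_range,
      ← Nat.cast_smul_eq_nsmul ℂ, smul_smul, inv_mul_cancel₀ hk0, one_smul]
  exact main _ (fun a => LP.pow_mul_P f hz hk hf j a)

lemma LP.range_P (hz : IsPrimitiveRoot z k) (hk : 0 < k) (hf : f ^ k = 1) (j : ℕ) :
    LinearMap.range (LP.P f k z j) = Module.End.eigenspace f (z ^ j) := by
  have hz0 : z ≠ 0 := hz.ne_zero hk.ne'
  have hk0 : (k : ℂ) ≠ 0 := Nat.cast_ne_zero.mpr hk.ne'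
  apply le_antisymm
  · rintro v ⟨y, rfl⟩
    rw [Module.End.mem_eigenspace_iff]
    have := congrArg (fun g : Module.End ℂ V => g y) (LP.mul_P f hz hk hf j)
    simpa using this
  · intro v hv
    rw [Module.End.mem_eigenspace_iff] at hv
    have hpow : ∀ a : ℕ, (f ^ a) v = (z ^ j) ^ a • v := by
      intro a
      induction a with
      | zero => simp
      | succ n ih => rw [pow_succ', Module.End.mul_apply, ih, LinearMap.map_smul, hv,
          smul_smul, ← pow_succ]
    refine ⟨v, ?_⟩
    rw [LP.P, LinearMap.smul_apply, LinearMap.sum_apply]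
    have : ∀ a ∈ range k, ((z⁻¹ ^ j) ^ a • f ^ a) v = v := by
      intro a _
      rw [LinearMap.smul_apply, hpow, smul_smul, ← mul_pow, ← mul_pow,
        inv_mul_cancel₀ hz0, one_pow, one_pow, one_smul]
    rw [Finset.sum_congr rfl this, Finset.sum_const, Finset.card_range,
      ← Nat.cast_smul_eq_nsmul ℂ, smul_smul, inv_mul_cancel₀ hk0, one_smul]

lemma LP.sum_P (hz : IsPrimitiveRoot z k) (hk : 0 < k) (hf : f ^ k = 1) :
    ∑ j ∈ range k, LP.P f k z j = 1 := by
  have hz0 : z ≠ 0 := hz.ne_zero hk.ne'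
  have hk0 : (k : ℂ) ≠ 0 := Nat.cast_ne_zero.mpr hk.ne'
  have hswap : ∑ j ∈ range k, LP.P f k z j
      = (k : ℂ)⁻¹ • ∑ a ∈ range k, (∑ j ∈ range k, (z⁻¹ ^ a) ^ j) • f ^ a := by
    simp only [LP.P]
    rw [← Finset.smul_sum, Finset.sum_comm]
    congr 1
    refine Finset.sum_congr rfl fun a _ => ?_
    rw [Finset.sum_smul]
    refine Finset.sum_congr rfl fun j _ => ?_
    rw [← pow_mul, mul_comm, pow_mul]
  rw [hswap]
  have : ∀ a ∈ range k, (∑ j ∈ range k, (z⁻¹ ^ a) ^ j) • (f ^ a)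
      = if a = 0 then (k : ℂ) • (1 : Module.End ℂ V) else 0 := by
    intro a ha
    rcases eq_or_ne a 0 with rfl | ha0
    · simp
    · have h1 : (z⁻¹ ^ a) ≠ 1 := by
        rw [inv_pow, ne_eq, inv_eq_one]
        intro hone
        exact ha0 (Nat.eq_zero_of_dvd_of_lt ((hz.pow_eq_one_iff_dvd a).mp hone)
          (mem_range.mp ha))
      have h2 : (z⁻¹ ^ a) ^ k = 1 := by
        rw [← pow_mul, mul_comm, pow_mul, inv_pow, hz.pow_eq_one, inv_one, one_pow]
      rw [if_neg ha0, geom_sum_eq h1, h2, sub_self, zero_div, zero_smul]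
  rw [Finset.sum_congr rfl this, Finset.sum_ite_eq' (range k) 0, if_pos (mem_range.mpr hk),
    smul_smul, inv_mul_cancel₀ hk0, one_smul]

lemma LP.trace_P (hz : IsPrimitiveRoot z k) (hk : 0 < k) (hf : f ^ k = 1) (j : ℕ) :
    LinearMap.trace ℂ V (LP.P f k z j)
      = (Module.finrank ℂ (Module.End.eigenspace f (z ^ j)) : ℂ) := by
  have hproj : LinearMap.IsProj (LinearMap.range (LP.P f k z j)) (LP.P f k z j) := by
    refine ⟨fun x => LinearMap.mem_range_self _ x, ?_⟩
    rintro x ⟨y, rfl⟩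
    have := congrArg (fun g : Module.End ℂ V => g y) (LP.P_idem f hz hk hf j)
    simpa using this
  rw [hproj.trace, LP.range_P f hz hk hf j]

lemma LP.trace_pow (hz : IsPrimitiveRoot z k) (hk : 0 < k) (hf : f ^ k = 1) (d : ℕ) :
    LinearMap.trace ℂ V (f ^ d)
      = ∑ j ∈ range k, (Module.finrank ℂ (Module.End.eigenspace f (z ^ j)) : ℂ) * z ^ (j * d) := by
  conv_lhs => rw [← mul_one (f ^ d), ← LP.sum_P f hz hk hf, Finset.mul_sum]
  rw [map_sum]
  refine Finset.sum_congr rfl fun j _ => ?_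
  rw [LP.pow_mul_P f hz hk hf, LinearMap.map_smul, LP.trace_P f hz hk hf, smul_eq_mul,
    ← pow_mul, mul_comm (z ^ (j * d)) _]

end aux

lemma LP.sum_embeddings {n : ℕ} (hn : 0 < n) {α : ℂ} (hα : IsPrimitiveRoot α n)
    (F : ℂ → ℂ) (x : IntermediateField.adjoin ℚ ({α} : Set ℂ))
    (hx : ∀ σ : (IntermediateField.adjoin ℚ ({α} : Set ℂ)) →ₐ[ℚ] ℂ,
      σ x = F (σ (IntermediateField.AdjoinSimple.gen ℚ α))) :
    algebraMap ℚ ℂ (Algebra.trace ℚ (IntermediateField.adjoin ℚ ({α} : Set ℂ)) x)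
      = ∑ w ∈ primitiveRoots n ℂ, F w := by
  classical
  have hint : IsIntegral ℚ α := (hα.isIntegral hn).tower_top
  haveI : FiniteDimensional ℚ (IntermediateField.adjoin ℚ ({α} : Set ℂ)) :=
    IntermediateField.adjoin.finiteDimensional hint
  rw [trace_eq_sum_embeddings (E := ℂ)]
  have hroots : (minpoly ℚ α).aroots ℂ = (primitiveRoots n ℂ).val := by
    haveI : NeZero ((n : ℕ) : ℂ) := ⟨Nat.cast_ne_zero.mpr hn.ne'⟩
    rw [← Polynomial.cyclotomic_eq_minpoly_rat hα hn, Polynomial.aroots_def,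
      Polynomial.map_cyclotomic, Polynomial.cyclotomic.roots_eq_primitiveRoots_val]
  let e := IntermediateField.algHomAdjoinIntegralEquiv ℚ (K := ℂ) hint
  have step1 : ∑ σ : (IntermediateField.adjoin ℚ ({α} : Set ℂ)) →ₐ[ℚ] ℂ, σ x
      = ∑ σ : (IntermediateField.adjoin ℚ ({α} : Set ℂ)) →ₐ[ℚ] ℂ,
          F (σ (IntermediateField.AdjoinSimple.gen ℚ α)) :=
    Finset.sum_congr rfl fun σ _ => hx σ
  have step2 : ∑ y : {x // x ∈ (minpoly ℚ α).aroots ℂ}, F y.1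
      = ∑ σ : (IntermediateField.adjoin ℚ ({α} : Set ℂ)) →ₐ[ℚ] ℂ,
          F (σ (IntermediateField.AdjoinSimple.gen ℚ α)) := by
    refine Fintype.sum_equiv e.symm _ _ fun y => ?_
    exact congrArg F (IntermediateField.algHomAdjoinIntegralEquiv_symm_apply_gen ℚ hint y).symm
  have step3 : ∑ y : {x // x ∈ (minpoly ℚ α).aroots ℂ}, F y.1
      = ∑ w ∈ ((minpoly ℚ α).aroots ℂ).toFinset, F w :=
    Finset.sum_mem_multiset _ _ _ fun y => rfl
  rw [step1, ← step2, step3, hroots, Finset.val_toFinset]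


lemma LP.alghom_apply {K : IntermediateField ℚ ℂ} (τ : ↥K →ₐ[ℚ] ℂ) (g : K) (m : ℕ → ℕ)
    (k : ℕ) (l : ℤ) :
    τ ((∑ j ∈ Finset.range k, (m j : K) * g ^ j) * g ^ (-l : ℤ))
      = (∑ j ∈ Finset.range k, (m j : ℂ) * (τ g) ^ j) * (τ g) ^ (-l : ℤ) := by
  rw [map_mul, map_sum, map_zpow₀]
  congr 1
  refine Finset.sum_congr rfl fun j _ => ?_
  rw [map_mul, map_pow, map_natCast]

/-- The augmentation map of the integral group ring of `G`. -/
noncomputable def aug (G : Type*) [Group G] : MonoidAlgebra ℤ G →ₐ[ℤ] ℤ :=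
  (MonoidAlgebra.lift ℤ ℤ G) 1

/-- The Luthar–Passi criterion: for a normalized torsion unit `u` of order `k` in the
integral group ring of a finite group `G`, a primitive `k`-th root of unity `z`, and a
complex representation `ρ` with character `χ` (extended to the group ring), for every
integer `l` the quantity
`μ_l(u,χ) = (1/k) ∑_{d ∣ k} Tr_{ℚ(z^d)/ℚ}(χ(u^d) z^{-dl})`
equals the multiplicity of the eigenvalue `z^l` of the image of `u` in the
representation; in particular it is a non-negative integer. -/
theorem luthar_passi (G : Type*) [Group G] [Fintype G]
    (V : Type*) [AddCommGroup V] [Module ℂ V] [FiniteDimensional ℂ V]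
    (ρ : Representation ℂ G V)
    (u : (MonoidAlgebra ℤ G)ˣ) (hnorm : aug G u = 1) (hu : IsOfFinOrder u)
    (k : ℕ) (hk : k = orderOf u)
    (z : ℂ) (hz : IsPrimitiveRoot z k) (l : ℤ)
    -- the extension of `ρ` to the integral group ring
    (π : MonoidAlgebra ℤ G →ₐ[ℤ] Module.End ℂ V)
    (hπ : π = (MonoidAlgebra.lift ℤ (Module.End ℂ V) G) ρ)
    -- the character values `χ(u^d)`, given by partial augmentations
    (χ : (MonoidAlgebra ℤ G)ˣ → ℂ)
    (hχ : ∀ w : (MonoidAlgebra ℤ G)ˣ, χ w = LinearMap.trace ℂ V (π (w : MonoidAlgebra ℤ G)))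
    -- `χ(u^d) z^{-dl}` lies in the cyclotomic field `ℚ(z^d)`
    (hmem : ∀ d : ℕ, d ∣ k →
      χ (u ^ d) * z ^ (-(d * l) : ℤ) ∈ IntermediateField.adjoin ℚ ({z ^ d} : Set ℂ)) :
    ((1 : ℚ) / k) *
        ∑ d ∈ k.divisors.attach,
          (Algebra.trace ℚ (IntermediateField.adjoin ℚ ({z ^ (d : ℕ)} : Set ℂ)))
            ⟨χ (u ^ (d : ℕ)) * z ^ (-((d : ℕ) * l) : ℤ),
              hmem d (Nat.mem_divisors.mp d.2).1⟩ =
      (Module.finrank ℂ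
        (Module.End.eigenspace (π (u : MonoidAlgebra ℤ G)) (z ^ l)) : ℚ) := by
  classical
  have hk0 : 0 < k := hk ▸ hu.orderOf_pos
  have hkC : (k : ℂ) ≠ 0 := Nat.cast_ne_zero.mpr hk0.ne'
  have hz0 : z ≠ 0 := hz.ne_zero hk0.ne'
  set f : Module.End ℂ V := π (u : MonoidAlgebra ℤ G) with hfdef
  have hfk : f ^ k = 1 := by
    rw [hfdef, ← map_pow, ← Units.val_pow_eq_pow_val, hk, pow_orderOf_eq_one, Units.val_one,
      map_one]
  set m : ℕ → ℕ := fun j => Module.finrank ℂ (Module.End.eigenspace f (z ^ j)) with hm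
  have hχd : ∀ d : ℕ, χ (u ^ d) = ∑ j ∈ Finset.range k, (m j : ℂ) * z ^ (j * d) := by
    intro d
    rw [hχ, Units.val_pow_eq_pow_val, map_pow, ← hfdef, LP.trace_pow f hz hk0 hfk d]
  set l0 : ℕ := (l % k).toNat with hl0
  have hlk : (0:ℤ) < (k:ℤ) := by exact_mod_cast hk0
  have hmod0 : 0 ≤ l % k := Int.emod_nonneg l hlk.ne'
  have hmodlt : l % k < k := Int.emod_lt_of_pos l hlk
  have hl0lt : l0 < k := by omega
  have hl0cast : ((l0 : ℕ) : ℤ) = l % k := Int.toNat_of_nonneg hmod0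
  -- the eigenvalue `z ^ l` equals `z ^ l0`
  have hzl : z ^ l = z ^ (l0 : ℕ) := by
    conv_lhs => rw [show l = (k:ℤ) * (l / k) + l % k from (Int.mul_ediv_add_emod l k).symm]
    rw [zpow_add₀ hz0, zpow_mul, zpow_natCast, hz.pow_eq_one, one_zpow, one_mul, ← hl0cast,
      zpow_natCast]
  -- the function summed over roots of unity
  set F : ℂ → ℂ := fun w => (∑ j ∈ Finset.range k, (m j : ℂ) * w ^ j) * w ^ (-l) with hF
  -- each trace equals a sum over primitive roots
  have key : ∀ d : ℕ, ∀ hd : d ∈ k.divisors,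
      algebraMap ℚ ℂ ((Algebra.trace ℚ (IntermediateField.adjoin ℚ ({z ^ d} : Set ℂ)))
          ⟨χ (u ^ d) * z ^ (-(d * l) : ℤ), hmem d (Nat.mem_divisors.mp hd).1⟩)
        = ∑ w ∈ primitiveRoots (k / d) ℂ, F w := by
    intro d hd
    obtain ⟨hdvd, -⟩ := Nat.mem_divisors.mp hd
    have hd0 : 0 < d := Nat.pos_of_mem_divisors hd
    have hn0 : 0 < k / d := Nat.div_pos (Nat.le_of_dvd hk0 hdvd) hd0
    have hα : IsPrimitiveRoot (z ^ d) (k / d) :=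
      hz.pow hk0 (Nat.mul_div_cancel' hdvd).symm
    have hgenval : (IntermediateField.adjoin ℚ ({z ^ d} : Set ℂ)).val
        (IntermediateField.AdjoinSimple.gen ℚ (z ^ d)) = z ^ d :=
      IntermediateField.AdjoinSimple.algebraMap_gen ℚ (z ^ d)
    have hxd : (⟨χ (u ^ d) * z ^ (-(d * l) : ℤ), hmem d hdvd⟩ :
        IntermediateField.adjoin ℚ ({z ^ d} : Set ℂ))
        = (∑ j ∈ Finset.range k,
              (m j : IntermediateField.adjoin ℚ ({z ^ d} : Set ℂ))
                * (IntermediateField.AdjoinSimple.gen ℚ (z ^ d)) ^ j)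
            * (IntermediateField.AdjoinSimple.gen ℚ (z ^ d)) ^ (-l : ℤ) := by
      apply Subtype.ext
      show χ (u ^ d) * z ^ (-(d * l) : ℤ)
          = (IntermediateField.adjoin ℚ ({z ^ d} : Set ℂ)).val
              ((∑ j ∈ Finset.range k,
                  (m j : IntermediateField.adjoin ℚ ({z ^ d} : Set ℂ))
                    * (IntermediateField.AdjoinSimple.gen ℚ (z ^ d)) ^ j)
                * (IntermediateField.AdjoinSimple.gen ℚ (z ^ d)) ^ (-l : ℤ))
      erw [LP.alghom_apply (IntermediateField.adjoin ℚ ({z ^ d} : Set ℂ)).val, hgenval, hχd d]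
      congr 1
      · refine Finset.sum_congr rfl fun j _ => ?_
        rw [mul_comm j d, pow_mul]
      · rw [← zpow_natCast z d, ← zpow_mul]
        congr 1
        push_cast
        ring
    refine LP.sum_embeddings hn0 hα F _ ?_
    intro σ
    rw [hxd, LP.alghom_apply]
  -- now reduce to a computation in ℂ
  apply (algebraMap ℚ ℂ).injective
  rw [map_mul, map_sum]
  have hsum1 : ∑ d ∈ k.divisors.attach,
      algebraMap ℚ ℂ ((Algebra.trace ℚ (IntermediateField.adjoin ℚ ({z ^ (d:ℕ)} : Set ℂ)))
        ⟨χ (u ^ (d:ℕ)) * z ^ (-((d:ℕ) * l) : ℤ), hmem d (Nat.mem_divisors.mp d.2).1⟩)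
      = ∑ d ∈ k.divisors.attach, ∑ w ∈ primitiveRoots (k / (d:ℕ)) ℂ, F w := by
    refine Finset.sum_congr rfl fun d _ => ?_
    exact key d d.2
  rw [hsum1,
    Finset.sum_attach k.divisors (fun e => ∑ w ∈ primitiveRoots (k / e) ℂ, F w),
    Nat.sum_div_divisors k (fun e => ∑ w ∈ primitiveRoots e ℂ, F w)]
  have hsum3 : ∑ d ∈ k.divisors, ∑ w ∈ primitiveRoots d ℂ, F w
      = ∑ w ∈ Polynomial.nthRootsFinset k (1 : ℂ), F w := by
    rw [IsPrimitiveRoot.nthRoots_one_eq_biUnion_primitiveRoots (n := k), Finset.sum_biUnion]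
    intro i _ j _ hij
    exact IsPrimitiveRoot.disjoint hij
  rw [hsum3]
  have himg : (Finset.range k).image (fun a => z ^ a) = Polynomial.nthRootsFinset k (1 : ℂ) := by
    apply Finset.eq_of_subset_of_card_le
    · intro w hw
      obtain ⟨a, _, rfl⟩ := Finset.mem_image.mp hw
      refine (Polynomial.mem_nthRootsFinset hk0 1).mpr ?_
      rw [← pow_mul, mul_comm, pow_mul, hz.pow_eq_one, one_pow]
    · rw [hz.card_nthRootsFinset, Finset.card_image_of_injOn, Finset.card_range]
      intro a ha b hb hab
      exact hz.pow_inj (Finset.mem_range.mp ha) (Finset.mem_range.mp hb) hab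
  rw [← himg, Finset.sum_image (fun a ha b hb hab =>
    hz.pow_inj (Finset.mem_range.mp ha) (Finset.mem_range.mp hb) hab)]
  -- expand F at powers of z
  have hFz : ∀ a ∈ Finset.range k, F (z ^ a)
      = ∑ j ∈ Finset.range k, (m j : ℂ) * (z ^ ((j:ℤ) - l)) ^ a := by
    intro a _
    have hza : z ^ a ≠ 0 := pow_ne_zero a hz0
    rw [hF]
    simp only []
    rw [Finset.sum_mul]
    refine Finset.sum_congr rfl fun j _ => ?_
    rw [mul_assoc]
    congr 1
    rw [← zpow_natCast (z ^ a) j, ← zpow_add₀ hza, ← sub_eq_add_neg,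
      ← zpow_natCast z a, ← zpow_mul, mul_comm, zpow_mul, zpow_natCast]
  rw [Finset.sum_congr rfl hFz, Finset.sum_comm]
  -- geometric sums
  have hgeom : ∀ j ∈ Finset.range k,
      ∑ a ∈ Finset.range k, (m j : ℂ) * (z ^ ((j:ℤ) - l)) ^ a
        = if j = l0 then (m j : ℂ) * k else 0 := by
    intro j hj
    rw [← Finset.mul_sum]
    have hck : (z ^ ((j:ℤ) - l)) ^ k = 1 := by
      rw [← zpow_natCast (z ^ ((j:ℤ) - l)) k, ← zpow_mul, mul_comm, zpow_mul, zpow_natCast,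
        hz.pow_eq_one, one_zpow]
    have hcond : z ^ ((j:ℤ) - l) = 1 ↔ j = l0 := by
      rw [hz.zpow_eq_one_iff_dvd, Int.dvd_iff_emod_eq_zero,
        ← Int.emod_eq_emod_iff_emod_sub_eq_zero,
        Int.emod_eq_of_lt (Int.ofNat_nonneg j) (by exact_mod_cast Finset.mem_range.mp hj),
        ← hl0cast]
      exact Nat.cast_inj
    rcases eq_or_ne j l0 with rfl | hne
    · rw [if_pos rfl, hcond.mpr rfl]
      simp
    · rw [if_neg hne]
      have h1 : z ^ ((j:ℤ) - l) ≠ 1 := fun h => hne (hcond.mp h)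
      rw [geom_sum_eq h1, hck, sub_self, zero_div, mul_zero]
  rw [Finset.sum_congr rfl hgeom, Finset.sum_ite_eq' (Finset.range k) l0
    (fun j => (m j : ℂ) * k), if_pos (Finset.mem_range.mpr hl0lt)]
  -- finish
  rw [map_div₀, map_one, map_natCast, map_natCast]
  rw [hzl]
  show 1 / (k:ℂ) * ((m l0 : ℂ) * k) = (m l0 : ℂ)
  field_simp
end
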